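/- On U = {x ∈ ℝ⁴ : x₄ > 0} define λ²(x) = 1/x₄², τ(x) = (0,0,0, 2/x₄), and T(x) = λ²(x)·τ(x) = (0,0,0, 2/x₄³). Then for all x ∈ U: 4Δ(λ²)(x) + 2 div T(x) = 12/x₄⁴, whereas λ²(x)|τ(x)|² = 4/x₄⁴; hence 4Δ(λ²)(x) + 2 div T(x) ≠ λ²(x)|τ(x)|² for every x ∈ U. -/

import Mathlib

noncomputable section

abbrev E (n : ℕ) := EuclideanSpace ℝ (Fin n)

/-- Partial derivative in the `i`-th coordinate direction. -/
def pd {m : ℕ} (u : E m → ℝ) (i : Fin m) : E m → ℝ :=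
  fun x => fderiv ℝ u x (EuclideanSpace.single i 1)

/-- Euclidean Laplacian `Δu = Σᵢ ∂²u/∂xᵢ²`. -/
def lap {m : ℕ} (u : E m → ℝ) : E m → ℝ :=
  fun x => ∑ i, pd (pd u i) i x

/-- Euclidean divergence of a vector field. -/
def div' {m : ℕ} (V : E m → E m) : E m → ℝ :=
  fun x => ∑ i, pd (fun y => V y i) i x

/-- Square dilation of the upper half-space hyperbolic metric: `λ²(x) = 1/x₄²`. -/
def sqDil : E 4 → ℝ := fun x => ((x 3) ^ 2)⁻¹

/-- Tension field `τ(x) = (0,0,0,2/x₄)`. -/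
def tau : E 4 → E 4 := fun x => EuclideanSpace.single (3 : Fin 4) (2 / x 3)

/-- The vector field `T = λ²·τ = (0,0,0,2/x₄³)`. -/
def T : E 4 → E 4 := fun x => sqDil x • tau x


/-!
Both `λ²` and `T` depend on `x₄` alone, and `T = 2 x₄⁻³ e₄`. For such functions the Laplacian and
the divergence reduce to one-variable derivatives in `x₄`: `Δ(x₄⁻²) = 6 x₄⁻⁴` and
`div (2 x₄⁻³ e₄) = -6 x₄⁻⁴`, so `4Δλ² + 2 div T = 24 x₄⁻⁴ - 12 x₄⁻⁴ = 12 x₄⁻⁴`, whereas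
`λ²|τ|² = x₄⁻² · 4 x₄⁻² = 4 x₄⁻⁴`.
-/

open Filter Topology

section Coordinate

variable {n : ℕ} {i j : Fin n} {x : E n}

lemma pd_comp_coord {f : ℝ → ℝ} (hf : DifferentiableAt ℝ f (x j)) :
    pd (fun y : E n => f (y j)) i x = if i = j then deriv f (x j) else 0 := by
  let proj : E n →L[ℝ] ℝ := EuclideanSpace.proj j
  have hcomp : (fun y : E n => f (y j)) = f ∘ proj := rfl
  rw [pd, hcomp, fderiv_comp x hf proj.differentiableAt,
    ContinuousLinearMap.fderiv]
  by_cases hij : i = j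
  · subst hij
    simp [proj]
  · simp [proj, hij, Ne.symm hij]

lemma pd_const (c : ℝ) : pd (fun _ : E n => c) i x = 0 := by
  simp [pd]

lemma div'_single_comp_coord {f : ℝ → ℝ} (hf : DifferentiableAt ℝ f (x j)) :
    div' (fun y : E n => EuclideanSpace.single j (f (y j))) x = deriv f (x j) := by
  have hterm : ∀ i, pd (fun y : E n => EuclideanSpace.single j (f (y j)) i) i x =
      if i = j then deriv f (x j) else 0 := by
    intro i
    by_cases hij : i = j
    · subst hij
      simpa using pd_comp_coord (i := i) hf
    · simpa [hij] using pd_const (i := i) (x := x) 0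
  simp only [div', hterm, Finset.sum_ite_eq', Finset.mem_univ, if_true]

-- Near `x` the gradient of `f ∘ xⱼ` is `(f' ∘ xⱼ) eⱼ`, so its Laplacian is a divergence.
lemma lap_comp_coord {f : ℝ → ℝ} (hf : ∀ᶠ t in 𝓝 (x j), DifferentiableAt ℝ f t)
    (hf' : DifferentiableAt ℝ (deriv f) (x j)) :
    lap (fun y : E n => f (y j)) x = deriv (deriv f) (x j) := by
  have hgrad : ∀ i, pd (fun y : E n => f (y j)) i =ᶠ[𝓝 x]
      fun y => EuclideanSpace.single j (deriv f (y j)) i := by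
    intro i
    filter_upwards [((EuclideanSpace.proj j).continuous.tendsto x).eventually hf] with y hy
    simp [pd_comp_coord hy]
  rw [← div'_single_comp_coord hf']
  refine Finset.sum_congr rfl fun i _ => ?_
  change fderiv ℝ _ x _ = fderiv ℝ _ x _
  rw [(hgrad i).fderiv_eq]

lemma lap_coord_zpow (m : ℤ) (hx : x j ≠ 0) :
    lap (fun y : E n => y j ^ m) x = m * (m - 1) * x j ^ (m - 2) := by
  have hdiff : ∀ᶠ t in 𝓝 (x j), DifferentiableAt ℝ (fun s : ℝ => s ^ m) t :=
    (eventually_ne_nhds hx).mono fun t ht => differentiableAt_zpow.mpr (Or.inl ht)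
  rw [lap_comp_coord hdiff, deriv_zpow']
  · simp only [deriv_const_mul_field', deriv_zpow, show m - 1 - 1 = m - 2 by ring]
    push_cast
    ring
  · rw [deriv_zpow']
    exact (differentiableAt_zpow.mpr (Or.inl hx)).const_mul _

lemma div'_single_coord_zpow (c : ℝ) (m : ℤ) (hx : x j ≠ 0) :
    div' (fun y : E n => EuclideanSpace.single j (c * y j ^ m)) x =
      c * m * x j ^ (m - 1) := by
  rw [div'_single_comp_coord (f := fun t => c * t ^ m)
    ((differentiableAt_zpow.mpr (Or.inl hx)).const_mul c)]
  simp only [deriv_const_mul_field', deriv_zpow]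
  ring

end Coordinate

lemma sqDil_eq : sqDil = fun y => y 3 ^ (-2 : ℤ) := by
  funext y
  simp [sqDil]

lemma T_eq : T = fun y => EuclideanSpace.single 3 (2 * y 3 ^ (-3 : ℤ)) := by
  funext y
  ext i
  by_cases hi : i = 3
  · simp [T, tau, sqDil, hi, zpow_neg, div_eq_mul_inv]
    ring
  · simp [T, tau, hi]

/-- On the upper half-space `{x₄ > 0}` of `ℝ⁴`: `4Δ(λ²) + 2divT = 12/x₄⁴` while
`λ²|τ|² = 4/x₄⁴`, so the trace identity for biharmonic morphisms fails everywhere: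
the identity map to the upper half-space model of `ℍ⁴` is not a biharmonic morphism. -/
theorem half_space_trace_identity_fails (x : E 4) (hx : 0 < x 3) :
    (∀ i : Fin 4, T x i = EuclideanSpace.single (3 : Fin 4) (2 / (x 3) ^ 3) i) ∧
    4 * lap sqDil x + 2 * div' T x = 12 / (x 3) ^ 4 ∧
    sqDil x * ‖tau x‖ ^ 2 = 4 / (x 3) ^ 4 ∧
    4 * lap sqDil x + 2 * div' T x ≠ sqDil x * ‖tau x‖ ^ 2 := by
  have hx0 : x 3 ≠ 0 := hx.ne'
  have htrace : 4 * lap sqDil x + 2 * div' T x = 12 / (x 3) ^ 4 := by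
    rw [sqDil_eq, T_eq, lap_coord_zpow _ hx0, div'_single_coord_zpow _ _ hx0]
    norm_num [zpow_neg]
    ring
  have htension : sqDil x * ‖tau x‖ ^ 2 = 4 / (x 3) ^ 4 := by
    rw [sqDil, tau, PiLp.norm_single, Real.norm_eq_abs, sq_abs]
    ring
  refine ⟨fun i => ?_, htrace, htension, ?_⟩
  · simp [T_eq, div_eq_mul_inv]
  · rw [htrace, htension]
    exact (div_lt_div_of_pos_right (by norm_num) (by positivity)).ne'

end
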